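/- (Theorem 1, case p = 0.) Let f : ℝⁿ → ℝⁿ be continuously differentiable and 0-dominant with rate λ ≥ 0, i.e., there exist a real symmetric positive definite n×n matrix P and ε > 0 such that Df(ξ)ᵀ P + P Df(ξ) + 2λ P ⪯ −ε I for all ξ ∈ ℝⁿ. Then every bounded solution x : [0,∞) → ℝⁿ of ξ' = f(ξ) converges as t → ∞ to a point ξ_e with f(ξ_e) = 0, and f has at most one zero; hence all bounded solutions converge to the same unique fixed point. -/

import Mathlib

/-!
For `p = 0` the certificate `P` is positive definite, and the dominance inequality says that `f`
contracts the metric `(a - b) ⬝ᵥ P *ᵥ (a - b)`: integrating it along segments gives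
`2 (a - b) ⬝ᵥ P (f a - f b) ≤ -ε |a - b|²` (the `λ`-term only helps, as `P ⪰ 0`).
Hence `f` is injective, and two solutions approach each other exponentially fast in this metric.
Comparing a bounded solution `x` with its time shifts `x (· + h)` shows that `x` is uniformly
Cauchy, so it converges; and since the velocity `f (x t)` converges too, its limit must vanish.
-/

open Matrix Filter

/-- The Jacobian matrix of a vector field `f : ℝⁿ → ℝⁿ` at a point `ξ`. -/
noncomputable def jacobianMatrix {n : ℕ} (f : (Fin n → ℝ) → (Fin n → ℝ)) (ξ : Fin n → ℝ) :
    Matrix (Fin n) (Fin n) ℝ :=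
  Matrix.of fun i j => fderiv ℝ f ξ (Pi.single j 1) i

open Topology Set

structure PosTwoHomogeneous {E : Type*} [NormedAddCommGroup E] [NormedSpace ℝ E] (q : E → ℝ) :
    Prop where
  continuous : Continuous q
  smul : ∀ (c : ℝ) (v : E), q (c • v) = c ^ 2 * q v
  pos : ∀ v, v ≠ 0 → 0 < q v

namespace PosTwoHomogeneous

variable {E : Type*} [NormedAddCommGroup E] [NormedSpace ℝ E] {q q₁ q₂ : E → ℝ}

lemma map_zero (hq : PosTwoHomogeneous q) : q 0 = 0 := by
  simpa using hq.smul 0 0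

lemma eq_norm_sq_mul (hq : PosTwoHomogeneous q) (v : E) : q v = ‖v‖ ^ 2 * q (‖v‖⁻¹ • v) := by
  rcases eq_or_ne v 0 with rfl | hv
  · simp [hq.map_zero]
  · rw [← hq.smul, smul_smul, mul_inv_cancel₀ (norm_ne_zero_iff.2 hv), one_smul]

/-- Compare `q₁ / q₂` with its maximum on the (compact) unit sphere. -/
lemma exists_le_mul [FiniteDimensional ℝ E] (h₁ : PosTwoHomogeneous q₁)
    (h₂ : PosTwoHomogeneous q₂) : ∃ C > 0, ∀ v, q₁ v ≤ C * q₂ v := by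
  rcases subsingleton_or_nontrivial E with hE | hE
  · exact ⟨1, one_pos, fun v => by simp [Subsingleton.elim v 0, h₁.map_zero, h₂.map_zero]⟩
  have hS : ∀ u ∈ Metric.sphere (0 : E) 1, u ≠ 0 := fun u hu =>
    ne_zero_of_mem_sphere one_ne_zero ⟨u, hu⟩
  obtain ⟨u₀, hu₀, hmax⟩ := (isCompact_sphere (0 : E) 1).exists_isMaxOn
    (NormedSpace.sphere_nonempty.2 zero_le_one)
    (h₁.continuous.continuousOn.div h₂.continuous.continuousOn fun u hu =>
      (h₂.pos u (hS u hu)).ne')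
  refine ⟨q₁ u₀ / q₂ u₀, div_pos (h₁.pos u₀ (hS u₀ hu₀)) (h₂.pos u₀ (hS u₀ hu₀)), fun v => ?_⟩
  rcases eq_or_ne v 0 with rfl | hv
  · simp [h₁.map_zero, h₂.map_zero]
  have hu : ‖v‖⁻¹ • v ∈ Metric.sphere (0 : E) 1 := by
    simp [norm_smul, inv_mul_cancel₀ (norm_ne_zero_iff.2 hv)]
  have hle : q₁ (‖v‖⁻¹ • v) ≤ q₁ u₀ / q₂ u₀ * q₂ (‖v‖⁻¹ • v) :=
    (div_le_iff₀ (h₂.pos _ (hS _ hu))).1 (hmax hu)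
  rw [h₁.eq_norm_sq_mul v, h₂.eq_norm_sq_mul v, mul_left_comm]
  exact mul_le_mul_of_nonneg_left hle (by positivity)

end PosTwoHomogeneous

lemma posTwoHomogeneous_norm_sq {E : Type*} [NormedAddCommGroup E] [NormedSpace ℝ E] :
    PosTwoHomogeneous fun v : E => ‖v‖ ^ 2 where
  continuous := continuous_norm.pow 2
  smul c v := by rw [norm_smul, mul_pow, Real.norm_eq_abs, sq_abs]
  pos v hv := by positivity

section Matrix

variable {ι : Type*} [Fintype ι]

lemma Matrix.PosDef.posTwoHomogeneous {P : Matrix ι ι ℝ} (hP : P.PosDef) :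
    PosTwoHomogeneous fun v : ι → ℝ => v ⬝ᵥ P *ᵥ v where
  continuous := by fun_prop
  smul c v := by simp only [mulVec_smul, smul_dotProduct, dotProduct_smul, smul_eq_mul]; ring
  pos v hv := by simpa using hP.dotProduct_mulVec_pos hv

lemma posTwoHomogeneous_dotProduct_self : PosTwoHomogeneous fun v : ι → ℝ => v ⬝ᵥ v := by
  classical
  simpa using (Matrix.PosDef.one (n := ι) (R := ℝ)).posTwoHomogeneous

lemma Matrix.IsSymm.dotProduct_mulVec_comm {P : Matrix ι ι ℝ} (hP : P.IsSymm) (v w : ι → ℝ) :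
    v ⬝ᵥ P *ᵥ w = w ⬝ᵥ P *ᵥ v := by
  conv_lhs => rw [← hP.eq]
  exact dotProduct_transpose_mulVec P v w

lemma HasDerivAt.dotProduct {u w : ℝ → ι → ℝ} {u' w' : ι → ℝ} {t : ℝ} (hu : HasDerivAt u u' t)
    (hw : HasDerivAt w w' t) : HasDerivAt (fun s => u s ⬝ᵥ w s) (u' ⬝ᵥ w t + u t ⬝ᵥ w') t := by
  have := HasDerivAt.fun_sum (u := Finset.univ) fun i _ =>
    (hasDerivAt_pi.1 hu i).fun_mul (hasDerivAt_pi.1 hw i)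
  rw [Finset.sum_add_distrib] at this
  exact this

lemma HasDerivAt.matrix_mulVec (A : Matrix ι ι ℝ) {w : ℝ → ι → ℝ} {w' : ι → ℝ} {t : ℝ}
    (hw : HasDerivAt w w' t) : HasDerivAt (fun s => A *ᵥ w s) (A *ᵥ w') t :=
  (Matrix.mulVecLin A).toContinuousLinearMap.hasFDerivAt.comp_hasDerivAt t hw

lemma two_mul_dotProduct_mulVec_mulVec_le {P J : Matrix ι ι ℝ} (hP : P.PosSemidef) {lam ε : ℝ}
    (hlam : 0 ≤ lam) {v : ι → ℝ}
    (h : v ⬝ᵥ (Jᵀ * P + P * J + (2 * lam) • P) *ᵥ v ≤ -ε * (v ⬝ᵥ v)) :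
    2 * (v ⬝ᵥ P *ᵥ J *ᵥ v) ≤ -ε * (v ⬝ᵥ v) := by
  have hPs : P.IsSymm := isHermitian_iff_isSymm.1 hP.isHermitian
  have hQ : 0 ≤ v ⬝ᵥ P *ᵥ v := by simpa using hP.dotProduct_mulVec_nonneg v
  have hJ : v ⬝ᵥ (Jᵀ * P) *ᵥ v = v ⬝ᵥ P *ᵥ J *ᵥ v := by
    rw [← mulVec_mulVec, dotProduct_transpose_mulVec, hPs.dotProduct_mulVec_comm, dotProduct_comm]
  rw [add_mulVec, add_mulVec, smul_mulVec, dotProduct_add, dotProduct_add, dotProduct_smul, hJ,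
    ← mulVec_mulVec, smul_eq_mul] at h
  nlinarith

end Matrix

lemma jacobianMatrix_mulVec {n : ℕ} (f : (Fin n → ℝ) → (Fin n → ℝ)) (ξ v : Fin n → ℝ) :
    jacobianMatrix f ξ *ᵥ v = fderiv ℝ f ξ v := by
  have : jacobianMatrix f ξ = LinearMap.toMatrix' (fderiv ℝ f ξ : (Fin n → ℝ) →ₗ[ℝ] _) := by
    ext i j; simp [jacobianMatrix, LinearMap.toMatrix'_apply]
  rw [this, LinearMap.toMatrix'_mulVec]
  rfl

lemma le_mul_exp_of_hasDerivAt_le_neg_mul {W W' : ℝ → ℝ} {c t : ℝ}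
    (hW : ∀ s, 0 ≤ s → HasDerivAt W (W' s) s) (hW' : ∀ s, 0 ≤ s → W' s ≤ -c * W s)
    (ht : 0 ≤ t) : W t ≤ W 0 * Real.exp (-c * t) := by
  have := le_gronwallBound_of_liminf_deriv_right_le (f := W) (f' := W') (δ := W 0) (K := -c)
    (ε := 0) (a := 0) (b := t) (fun s hs => (hW s hs.1).continuousAt.continuousWithinAt)
    (fun s hs _ hr => (hW s hs.1).hasDerivWithinAt.liminf_right_slope_le hr) le_rfl
    (fun s hs => by simpa using hW' s hs.1) t ⟨ht, le_rfl⟩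
  simpa [gronwallBound_ε0] using this

lemma eq_zero_of_tendsto_of_hasDerivAt {E : Type*} [NormedAddCommGroup E] [NormedSpace ℝ E]
    {x g : ℝ → E} {ξ L : E} (hx : ∀ᶠ t in atTop, HasDerivAt x (g t) t)
    (hxξ : Tendsto x atTop (𝓝 ξ)) (hgL : Tendsto g atTop (𝓝 L)) : L = 0 := by
  refine norm_le_zero_iff.1 (le_of_forall_pos_le_add fun δ hδ => ?_)
  have hstep : ∀ᶠ t in atTop, ‖x (t + 1) - x t - L‖ ≤ δ := by
    obtain ⟨T, hT⟩ := eventually_atTop.1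
      (hx.and (hgL.eventually (Metric.closedBall_mem_nhds L hδ)))
    filter_upwards [eventually_ge_atTop T] with t ht
    have hy : ∀ s ∈ Icc t (t + 1),
        HasDerivWithinAt (fun s => x s - s • L) (g s - L) (Icc t (t + 1)) s := fun s hs => by
      simpa using
        ((hT s (ht.trans hs.1)).1.fun_sub ((hasDerivAt_id s).smul_const L)).hasDerivWithinAt
    have hmvt := norm_image_sub_le_of_norm_deriv_le_segment' hy
      (fun s hs => by simpa [dist_eq_norm] using (hT s (ht.trans hs.1)).2) (t + 1)
      ⟨by linarith, le_rfl⟩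
    calc ‖x (t + 1) - x t - L‖ = ‖x (t + 1) - (t + 1) • L - (x t - t • L)‖ := by
          rw [add_smul, one_smul]; abel_nf
      _ ≤ δ * (t + 1 - t) := hmvt
      _ = δ := by ring
  have hlim : Tendsto (fun t => x (t + 1) - x t - L) atTop (𝓝 (ξ - ξ - L)) :=
    ((hxξ.comp (tendsto_atTop_add_const_right _ 1 tendsto_id)).sub hxξ).sub_const L
  simpa using le_of_tendsto hlim.norm hstep

lemma cauchySeq_of_dist_add_le {α : Type*} [PseudoMetricSpace α] {x : ℝ → α} {g : ℝ → ℝ}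
    (hg : Tendsto g atTop (𝓝 0)) (hx : ∀ t h, 0 ≤ t → 0 ≤ h → dist (x (t + h)) (x t) ≤ g t) :
    CauchySeq x := by
  refine Metric.cauchySeq_iff'.2 fun δ hδ => ?_
  obtain ⟨T, hT⟩ := ((hg.eventually (gt_mem_nhds hδ)).and (eventually_ge_atTop 0)).exists
  refine ⟨T, fun s hs => ?_⟩
  have := hx T (s - T) hT.2 (sub_nonneg.2 hs)
  rw [add_sub_cancel] at this
  exact this.trans_lt hT.1

section Contraction

variable {ι : Type*} [Fintype ι]

def IsContractingVectorField (P : Matrix ι ι ℝ) (ε : ℝ) (f : (ι → ℝ) → ι → ℝ) : Prop :=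
  ∀ a b, 2 * ((a - b) ⬝ᵥ P *ᵥ (f a - f b)) ≤ -ε * ((a - b) ⬝ᵥ (a - b))

/-- Integrate the infinitesimal estimate along the segment from `b` to `a`. -/
lemma isContractingVectorField_of_fderiv {P : Matrix ι ι ℝ} {ε : ℝ} {f : (ι → ℝ) → ι → ℝ}
    (hf : Differentiable ℝ f) (hJ : ∀ ξ v, 2 * (v ⬝ᵥ P *ᵥ fderiv ℝ f ξ v) ≤ -ε * (v ⬝ᵥ v)) :
    IsContractingVectorField P ε f := by
  intro a b
  set v := a - b
  have hφ : ∀ s : ℝ, HasDerivAt (fun s => 2 * (v ⬝ᵥ P *ᵥ f (b + s • v)))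
      (2 * (v ⬝ᵥ P *ᵥ fderiv ℝ f (b + s • v) v)) s := by
    intro s
    have hline : HasDerivAt (fun s : ℝ => b + s • v) v s := by
      simpa using ((hasDerivAt_id s).smul_const v).const_add b
    have hfline := (hf _).hasFDerivAt.comp_hasDerivAt s hline
    simpa using ((hasDerivAt_const s v).dotProduct (hfline.matrix_mulVec P)).const_mul 2
  have := image_sub_le_mul_sub_of_deriv_le (fun s => (hφ s).differentiableAt)
    (fun s => (hφ s).deriv.trans_le (hJ _ v)) zero_le_one
  simpa [v, mulVec_sub, mul_sub] using this

lemma IsContractingVectorField.injective {P : Matrix ι ι ℝ} {ε : ℝ} {f : (ι → ℝ) → ι → ℝ}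
    (hf : IsContractingVectorField P ε f) (hε : 0 < ε) : Function.Injective f := by
  intro a b hab
  have h := hf a b
  rw [hab, sub_self, mulVec_zero, dotProduct_zero, mul_zero] at h
  by_contra hne
  have hpos := posTwoHomogeneous_dotProduct_self.pos (a - b) (sub_ne_zero.2 hne)
  linarith [mul_pos hε hpos]

lemma IsContractingVectorField.dotProduct_mulVec_sub_le {P : Matrix ι ι ℝ} {ε c : ℝ}
    {f : (ι → ℝ) → ι → ℝ} (hf : IsContractingVectorField P ε f) (hP : P.IsSymm)
    (hc : ∀ v, c * (v ⬝ᵥ P *ᵥ v) ≤ ε * (v ⬝ᵥ v)) {y z : ℝ → ι → ℝ}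
    (hy : ∀ t, 0 ≤ t → HasDerivAt y (f (y t)) t) (hz : ∀ t, 0 ≤ t → HasDerivAt z (f (z t)) t)
    {t : ℝ} (ht : 0 ≤ t) :
    (y t - z t) ⬝ᵥ P *ᵥ (y t - z t) ≤
      (y 0 - z 0) ⬝ᵥ P *ᵥ (y 0 - z 0) * Real.exp (-c * t) := by
  refine le_mul_exp_of_hasDerivAt_le_neg_mul (W := fun s => (y s - z s) ⬝ᵥ P *ᵥ (y s - z s))
    (W' := fun s => 2 * ((y s - z s) ⬝ᵥ P *ᵥ (f (y s) - f (z s)))) (fun s hs => ?_)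
    (fun s _ => ?_) ht
  · have hu := (hy s hs).sub (hz s hs)
    have := hu.dotProduct (hu.matrix_mulVec P)
    rwa [hP.dotProduct_mulVec_comm (f (y s) - f (z s)), ← two_mul] at this
  · linarith [hf (y s) (z s), hc (y s - z s)]

lemma IsContractingVectorField.exists_tendsto {P : Matrix ι ι ℝ} {ε : ℝ}
    {f : (ι → ℝ) → ι → ℝ} (hf : IsContractingVectorField P ε f) (hP : P.PosDef) (hε : 0 < ε)
    {x : ℝ → ι → ℝ} (hx : ∀ t, 0 ≤ t → HasDerivAt x (f (x t)) t)
    (hbdd : Bornology.IsBounded (x '' Ici 0)) : ∃ ξ, Tendsto x atTop (𝓝 ξ) := by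
  obtain ⟨M, hM, hQM⟩ := hP.posTwoHomogeneous.exists_le_mul posTwoHomogeneous_dotProduct_self
  obtain ⟨K, hK, hK'⟩ := posTwoHomogeneous_norm_sq.exists_le_mul hP.posTwoHomogeneous
  obtain ⟨L, hL, hL'⟩ := hP.posTwoHomogeneous.exists_le_mul posTwoHomogeneous_norm_sq
  obtain ⟨C, hC⟩ := Metric.isBounded_iff.1 hbdd
  have hc : ∀ v, ε / M * (v ⬝ᵥ P *ᵥ v) ≤ ε * (v ⬝ᵥ v) := fun v => calc
    ε / M * (v ⬝ᵥ P *ᵥ v) ≤ ε / M * (M * (v ⬝ᵥ v)) := by gcongr; exact hQM v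
    _ = ε * (v ⬝ᵥ v) := by field_simp
  have hdist : ∀ t h, 0 ≤ t → 0 ≤ h →
      dist (x (t + h)) (x t) ≤ √(K * (L * C ^ 2) * Real.exp (-(ε / M) * t)) := by
    intro t h ht hh
    have hxh : ∀ s, 0 ≤ s → HasDerivAt (fun s => x (s + h)) (f (x (s + h))) s := fun s hs =>
      (hx (s + h) (by positivity)).comp_add_const s h
    have hdecay := hf.dotProduct_mulVec_sub_le (isHermitian_iff_isSymm.1 hP.isHermitian) hc
      hxh hx ht
    have hC0 : ‖x h - x 0‖ ^ 2 ≤ C ^ 2 := by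
      simpa [← dist_eq_norm] using pow_le_pow_left₀ dist_nonneg
        (hC ⟨h, hh, rfl⟩ ⟨0, self_mem_Ici, rfl⟩) 2
    refine Real.le_sqrt_of_sq_le ?_
    calc dist (x (t + h)) (x t) ^ 2 ≤ K * ((x (t + h) - x t) ⬝ᵥ P *ᵥ (x (t + h) - x t)) := by
          rw [dist_eq_norm]; exact hK' _
      _ ≤ K * ((x h - x 0) ⬝ᵥ P *ᵥ (x h - x 0) * Real.exp (-(ε / M) * t)) := by
          simpa using mul_le_mul_of_nonneg_left hdecay hK.le
      _ ≤ K * (L * C ^ 2) * Real.exp (-(ε / M) * t) := by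
          rw [mul_assoc]
          gcongr
          exact (hL' _).trans (by gcongr)
  refine cauchySeq_tendsto_of_complete (cauchySeq_of_dist_add_le ?_ hdist)
  have hexp : Tendsto (fun t => Real.exp (-(ε / M) * t)) atTop (𝓝 0) :=
    Real.tendsto_exp_atBot.comp (tendsto_id.const_mul_atTop_of_neg (by simp [hε, hM]))
  simpa using (hexp.const_mul (K * (L * C ^ 2))).sqrt

end Contraction

/-- Theorem 1, case `p = 0`. For a `0`-dominant system (positive definite
certificate `P`, rate `λ ≥ 0`), every bounded solution converges to a zero of `f`, and `f`
has at most one zero; hence all bounded solutions converge to the same unique fixed point. -/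
theorem zero_dominant_bounded_solutions_converge
    {n : ℕ} (f : (Fin n → ℝ) → (Fin n → ℝ)) (hf : ContDiff ℝ 1 f)
    (P : Matrix (Fin n) (Fin n) ℝ) (hP : P.PosDef)
    (lam ε : ℝ) (hlam : 0 ≤ lam) (hε : 0 < ε)
    (hLMI : ∀ ξ : Fin n → ℝ, ∀ v : Fin n → ℝ,
      v ⬝ᵥ (((jacobianMatrix f ξ)ᵀ * P + P * jacobianMatrix f ξ +
        (2 * lam) • P).mulVec v) ≤ -ε * (v ⬝ᵥ v))
    (x : ℝ → (Fin n → ℝ))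
    (hx : ∀ t, 0 ≤ t → HasDerivAt x (f (x t)) t)
    (hbounded : Bornology.IsBounded (x '' Set.Ici 0)) :
    (∃ ξe : Fin n → ℝ, f ξe = 0 ∧ Tendsto x atTop (nhds ξe)) ∧
    (∀ a b : Fin n → ℝ, f a = 0 → f b = 0 → a = b) := by
  have hcontr : IsContractingVectorField P ε f :=
    isContractingVectorField_of_fderiv (hf.differentiable one_ne_zero) fun ξ v => by
      rw [← jacobianMatrix_mulVec]
      exact two_mul_dotProduct_mulVec_mulVec_le hP.posSemidef hlam (hLMI ξ v)
  obtain ⟨ξe, hξe⟩ := hcontr.exists_tendsto hP hε hx hbounded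
  have hfξe : f ξe = 0 := eq_zero_of_tendsto_of_hasDerivAt
    ((eventually_ge_atTop 0).mono hx) hξe ((hf.continuous.tendsto ξe).comp hξe)
  exact ⟨⟨ξe, hfξe, hξe⟩, fun a b ha hb => hcontr.injective hε (ha.trans hb.symm)⟩
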